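/- Assume s+1 < γ₀, and let η, η̃ be real numbers with s + 1 + (η̃ − η) ≤ η < η̃ < γ₀ and 𝓘^{η̃}(0,S) < +∞. Then there exists a constant C such that for all t ∈ ℝ and all f ∈ 𝓑_η: m_η(P(t)^{n₀} f) ≤ ϑ₀ m_η(f) + C |t| |f|_{η̃}. -/

import Mathlib

open MeasureTheory ProbabilityTheory Filter Topology
open scoped ENNReal NNReal

noncomputable section


lemma helper_norm_exp (a : ℝ) : ‖Complex.exp (Complex.I * a)‖ = 1 := by
  rw [Complex.norm_exp]
  simp

lemma ofReal_norm_eq_coe_nnnorm {E : Type*} [SeminormedAddCommGroup E] (a : E) :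
    ENNReal.ofReal ‖a‖ = (‖a‖₊ : ℝ≥0∞) :=
  ENNReal.ofReal_eq_coe_nnreal (norm_nonneg a)

lemma helper_exp_diff (a b : ℝ) :
    ‖Complex.exp (Complex.I * a) - Complex.exp (Complex.I * b)‖ ≤ 2 * |a - b| := by
  have key : Complex.exp (Complex.I * a) - Complex.exp (Complex.I * b)
      = Complex.exp (Complex.I * b) * (Complex.exp (Complex.I * (a - b : ℝ)) - 1) := by
    rw [mul_sub, ← Complex.exp_add, mul_one]
    congr 2
    push_cast
    ring
  rw [key, norm_mul, helper_norm_exp, one_mul]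
  by_cases hab : |a - b| ≤ 1
  · have habs : ‖Complex.I * (a - b : ℝ)‖ = |a - b| := by
      rw [norm_mul, Complex.norm_I, one_mul, Complex.norm_real, Real.norm_eq_abs]
    have := Complex.norm_exp_sub_one_le (x := Complex.I * (a - b : ℝ)) (by rw [habs]; exact hab)
    rw [habs] at this
    simpa using this
  · have h1 : (1:ℝ) ≤ |a - b| := le_of_not_ge hab
    calc ‖Complex.exp (Complex.I * (a - b : ℝ)) - 1‖
        ≤ ‖Complex.exp (Complex.I * (a - b : ℝ))‖ + ‖(1:ℂ)‖ := norm_sub_le _ _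
      _ = 2 := by rw [helper_norm_exp]; norm_num
      _ ≤ 2 * |a - b| := by linarith

lemma helper_int_diff {α E : Type*} [MeasurableSpace α] {μ : Measure α}
    [NormedAddCommGroup E] [NormedSpace ℝ E] (u v : α → E)
    (hu : AEStronglyMeasurable u μ) (hv : AEStronglyMeasurable v μ) :
    (‖(∫ a, u a ∂μ) - ∫ a, v a ∂μ‖₊ : ℝ≥0∞) ≤ ∫⁻ a, ‖u a - v a‖₊ ∂μ := by
  by_cases h : Integrable (fun a => u a - v a) μ
  · by_cases hui : Integrable u μ
    · have hvi : Integrable v μ := by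
        have h2 := hui.sub h
        have h3 : (u - fun a => u a - v a) = v := by
          funext a; simp [Pi.sub_apply, sub_sub_cancel]
        rwa [h3] at h2
      rw [← integral_sub hui hvi]
      exact enorm_integral_le_lintegral_enorm _
    · have hvi : ¬ Integrable v μ := by
        intro hv'
        have h2 := h.add hv'
        have h3 : ((fun a => u a - v a) + v) = u := by
          funext a; simp [Pi.add_apply, sub_add_cancel]
        exact hui (by rwa [h3] at h2)
      rw [integral_undef hui, integral_undef hvi]
      simp
  · rcases eq_top_or_lt_top (∫⁻ a, ‖u a - v a‖₊ ∂μ) with ht | ht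
    · rw [ht]; exact le_top
    · exact absurd ⟨hu.sub hv, ht⟩ h

lemma helper_norm_exp2 (t a : ℝ) : ‖Complex.exp (Complex.I * ((t : ℂ) * (a : ℂ)))‖ = 1 := by
  have h : Complex.I * ((t : ℂ) * (a : ℂ)) = Complex.I * ((t * a : ℝ) : ℂ) := by
    push_cast
    ring
  rw [h, helper_norm_exp]

lemma helper_exp_diff2 (t a b : ℝ) :
    ‖Complex.exp (Complex.I * ((t : ℂ) * (a : ℂ)))
      - Complex.exp (Complex.I * ((t : ℂ) * (b : ℂ)))‖ ≤ 2 * |t * a - t * b| := by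
  have h1 : Complex.I * ((t : ℂ) * (a : ℂ)) = Complex.I * ((t * a : ℝ) : ℂ) := by
    push_cast; ring
  have h2 : Complex.I * ((t : ℂ) * (b : ℂ)) = Complex.I * ((t * b : ℝ) : ℂ) := by
    push_cast; ring
  rw [h1, h2]
  exact helper_exp_diff (t * a) (t * b)


/-- `p_λ(x) = 1 + λ d(x,x₀)` -/
def pfun {M : Type*} [MetricSpace M] (x₀ : M) (lam : ℝ) (x : M) : ℝ :=
  1 + lam * dist x x₀

/-- `δ_λ(g) = max{c(g),1} + λ d(g x₀, x₀)` -/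
def deltaFun {M G : Type*} [MetricSpace M] (x₀ : M) (act : G → M → M) (c : G → ℝ)
    (lam : ℝ) (g : G) : ℝ :=
  max (c g) 1 + lam * dist (act g x₀) x₀

/-- `δ̃(g) = 1 + c(g) + d(g x₀, x₀)` -/
def deltaTilde {M G : Type*} [MetricSpace M] (x₀ : M) (act : G → M → M) (c : G → ℝ)
    (g : G) : ℝ :=
  1 + c g + dist (act g x₀) x₀

/-- the weight `Δ_γ(x,y) = d(x,y) p(x)^γ p(y)^γ` -/
def wDelta {M : Type*} [MetricSpace M] (x₀ : M) (lam γ : ℝ) (x y : M) : ℝ :=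
  dist x y * pfun x₀ lam x ^ γ * pfun x₀ lam y ^ γ

/-- `m_γ(f)`, the best Lipschitz-type constant of `f` w.r.t. the weight `Δ_γ` -/
def mGam {M : Type*} [MetricSpace M] (x₀ : M) (lam γ : ℝ) (f : M → ℂ) : ℝ :=
  sSup {ρ : ℝ | ∃ x y : M, x ≠ y ∧ ρ = ‖f x - f y‖ / wDelta x₀ lam γ x y}

/-- `|f|_η = sup_x |f(x)|/p(x)^{η+1}` -/
def nrmGam {M : Type*} [MetricSpace M] (x₀ : M) (lam η : ℝ) (f : M → ℂ) : ℝ :=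
  sSup {ρ : ℝ | ∃ x : M, ρ = ‖f x‖ / pfun x₀ lam x ^ (η + 1)}

/-- membership in the space `𝓑_γ` -/
def memB {M : Type*} [MetricSpace M] (x₀ : M) (lam γ : ℝ) (f : M → ℂ) : Prop :=
  ∃ K : ℝ, ∀ x y : M, ‖f x - f y‖ ≤ K * wDelta x₀ lam γ x y

/-- the norm `N_{∞,γ}` on `𝓑_γ` -/
def nInf {M : Type*} [MetricSpace M] (x₀ : M) (lam γ : ℝ) (f : M → ℂ) : ℝ :=
  mGam x₀ lam γ f + nrmGam x₀ lam γ f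

/-- the Markov transition operator `P` acting on complex functions -/
def Pop {M G : Type*} [MeasurableSpace G] (π : Measure G) (act : G → M → M)
    (f : M → ℂ) (x : M) : ℂ :=
  ∫ g, f (act g x) ∂π

/-- the Markov transition operator `P` acting on real functions -/
def PopR {M G : Type*} [MeasurableSpace G] (π : Measure G) (act : G → M → M)
    (f : M → ℝ) (x : M) : ℝ :=
  ∫ g, f (act g x) ∂π

/-- the Fourier kernel `P(t)` -/
def Pt {M G : Type*} [MeasurableSpace G] (π : Measure G) (act : G → M → M)
    (ξ : G → M → ℝ) (t : ℝ) (f : M → ℂ) (x : M) : ℂ :=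
  ∫ g, Complex.exp (Complex.I * (t * ξ g x)) * f (act g x) ∂π

/-- the derivative kernels `L_k` -/
def Lk {M G : Type*} [MeasurableSpace G] (π : Measure G) (act : G → M → M)
    (ξ : G → M → ℝ) (k : ℕ) (f : M → ℂ) (x : M) : ℂ :=
  ∫ g, (Complex.I * (ξ g x : ℂ)) ^ k * f (act g x) ∂π

/-- `piStar π n` is the convolution power `π^{*(n+1)}`, the law of `R_{n+1} = Y_{n+1} ⋯ Y₁`. -/
def piStar {G : Type*} [MeasurableSpace G] [Mul G] (π : Measure G) : ℕ → Measure G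
  | 0 => π
  | n + 1 => Measure.map (fun q : G × G => q.1 * q.2) (π.prod (piStar π n))

/-- `ϑ₀ = ∫ c(g) δ_{λ₀}(g)^{2γ₀} dπ^{*n₀}(g)` (with `n₀` shifted by one). -/
def theta0 {M G : Type*} [MetricSpace M] [MeasurableSpace G] [Mul G] (x₀ : M)
    (act : G → M → M) (c : G → ℝ) (π : Measure G) (lam₀ γ₀ : ℝ) (n₀ : ℕ) : ℝ :=
  ∫ g, c g * deltaFun x₀ act c lam₀ g ^ (2 * γ₀) ∂(piStar π n₀)

/-- `𝓙^τ(U,V)` as a lower integral. -/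
def Jtau {M G : Type*} [MetricSpace M] [MeasurableSpace G] (x₀ : M) (act : G → M → M)
    (c : G → ℝ) (π : Measure G) (τ : ℝ) (U V : G → ℝ) : ℝ≥0∞ :=
  (∫⁻ g, ENNReal.ofReal (U g * (c g * deltaTilde x₀ act c g ^ (2 * τ))) ∂π) +
    ∫⁻ g, ENNReal.ofReal (V g * deltaTilde x₀ act c g ^ (τ + 1)) ∂π

/-- the random trajectory `Z_n`: `traj act Y Z n = R_n Z` where `R_n = Y_n ⋯ Y₁`
(`Y k` stands for `Y_{k+1}`). -/
def traj {M G Ω : Type*} (act : G → M → M) (Y : ℕ → Ω → G) (Z : Ω → M) : ℕ → Ω → M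
  | 0 => Z
  | n + 1 => fun ω => act (Y n ω) (traj act Y Z n ω)

/-- `S_n^Z = Σ_{k=1}^n ξ(Y_k, Z_{k-1})` -/
def Sn {M G Ω : Type*} (act : G → M → M) (ξ : G → M → ℝ) (Y : ℕ → Ω → G) (Z : Ω → M)
    (n : ℕ) (ω : Ω) : ℝ :=
  ∑ k ∈ Finset.range n, ξ (Y k ω) (traj act Y Z k ω)

/-- convergence in distribution, expressed through bounded continuous test functions -/
def CvgInDist {Ω : Type*} [MeasurableSpace Ω] (P : Measure Ω) (X : ℕ → Ω → ℝ)
    (μ : Measure ℝ) : Prop :=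
  ∀ f : ℝ → ℝ, Continuous f → (∃ C : ℝ, ∀ x, |f x| ≤ C) →
    Tendsto (fun n => ∫ ω, f (X n ω) ∂P) atTop (𝓝 (∫ x, f x ∂μ))

/-- the topological support of a measure -/
def msupport {M : Type*} [TopologicalSpace M] [MeasurableSpace M] (ν : Measure M) : Set M :=
  {x | ∀ U : Set M, IsOpen U → x ∈ U → 0 < ν U}

/-- the product `h* = h₁ ⋯ h_{k+1}` of a tuple of elements of the semigroup `G` -/
def hstar {G : Type*} [Semigroup G] : ∀ {k : ℕ}, (Fin (k + 1) → G) → G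
  | 0, h => h 0
  | _ + 1, h => h 0 * hstar (Fin.tail h)


set_option maxHeartbeats 1000000 in
/-- Proposition 6.7. `piStar π n₀ = π^{*(n₀+1)}`, so `P(t)^{n₀+1}`
here plays the role of the paper's `P(t)^{n₀}`. -/
theorem stmt11
    {M : Type*} [MetricSpace M] [ProperSpace M] [MeasurableSpace M] [BorelSpace M]
    {G : Type*} [Semigroup G] [MeasurableSpace G] [MeasurableMul₂ G]
    (x₀ : M) (act : G → M → M)
    (hact : ∀ (g h : G) (x : M), act (g * h) x = act g (act h x))
    (hactm : Measurable fun q : G × M => act q.1 q.2)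
    (c : G → ℝ) (hcm : Measurable c)
    (hc0 : ∀ g : G, 0 ≤ c g)
    (hcLip : ∀ (g : G) (x y : M), dist (act g x) (act g y) ≤ c g * dist x y)
    (hcMin : ∀ (g : G) (K : ℝ), 0 ≤ K →
      (∀ x y : M, dist (act g x) (act g y) ≤ K * dist x y) → c g ≤ K)
    (π : Measure G) [IsProbabilityMeasure π]
    -- condition 𝓗(γ₀)
    (γ₀ : ℝ) (hγ₀ : 0 < γ₀) (n₀ : ℕ)
    (hM : ∫⁻ g, ENNReal.ofReal (deltaTilde x₀ act c g ^ (γ₀ + 1)) ∂π < ⊤)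
    (hM' : ∫⁻ g, ENNReal.ofReal (c g * deltaTilde x₀ act c g ^ (2 * γ₀)) ∂π < ⊤)
    (hC : ∫⁻ g, ENNReal.ofReal (c g * max (c g) 1 ^ (2 * γ₀)) ∂(piStar π n₀) < 1)
    -- `λ₀ ∈ (0,1]` with `ϑ₀ < 1`
    (lam₀ : ℝ) (hlam₀ : 0 < lam₀) (hlam₀' : lam₀ ≤ 1)
    (hθint : Integrable (fun g => c g * deltaFun x₀ act c lam₀ g ^ (2 * γ₀)) (piStar π n₀))
    (hθ : theta0 x₀ act c π lam₀ γ₀ n₀ < 1)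
    -- condition RS
    (ξ : G → M → ℝ) (hξm : Measurable fun q : G × M => ξ q.1 q.2)
    (r s : ℝ) (hr : 0 ≤ r) (hs : 0 ≤ s)
    (R S : G → ℝ) (hRm : Measurable R) (hSm : Measurable S)
    (hR0 : ∀ g, 0 ≤ R g) (hS0 : ∀ g, 0 ≤ S g)
    (hRS1 : ∀ (g : G) (x : M), |ξ g x| ≤ R g * (1 + dist x x₀) ^ r)
    (hRS2 : ∀ (g : G) (x y : M),
      |ξ g x - ξ g y| ≤ S g * dist x y * (1 + dist x x₀ + dist y x₀) ^ s)
    -- hypotheses of Proposition 6.7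
    (hsγ₀ : s + 1 < γ₀)
    (η ηt : ℝ) (h1 : s + 1 + (ηt - η) ≤ η) (h2 : η < ηt) (h3 : ηt < γ₀)
    (hIS : ∫⁻ g, ENNReal.ofReal (S g * deltaFun x₀ act c lam₀ g ^ (ηt + 1)) ∂π < ⊤) :
    ∃ C : ℝ, ∀ (t : ℝ) (f : M → ℂ), memB x₀ lam₀ η f →
      mGam x₀ lam₀ η ((Pt π act ξ t)^[n₀ + 1] f)
        ≤ theta0 x₀ act c π lam₀ γ₀ n₀ * mGam x₀ lam₀ η f
          + C * |t| * nrmGam x₀ lam₀ ηt f := by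
  classical
  -- basic positivity facts
  have hp1 : ∀ z : M, 1 ≤ (pfun x₀ lam₀) z := by
    intro z
    have h := mul_nonneg hlam₀.le (dist_nonneg (x := z) (y := x₀))
    simp only [pfun]; linarith
  have hp0 : ∀ z : M, 0 < (pfun x₀ lam₀) z := fun z => lt_of_lt_of_le one_pos (hp1 z)
  have hd1 : ∀ g : G, 1 ≤ (deltaFun x₀ act c lam₀) g := by
    intro g
    have h1 : (1:ℝ) ≤ max (c g) 1 := le_max_right _ _
    have h2 := mul_nonneg hlam₀.le (dist_nonneg (x := act g x₀) (y := x₀))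
    simp only [deltaFun]; linarith
  have hd0 : ∀ g : G, 0 < (deltaFun x₀ act c lam₀) g := fun g => lt_of_lt_of_le one_pos (hd1 g)
  have hdt1 : ∀ g : G, 1 ≤ (deltaTilde x₀ act c) g := by
    intro g
    have h1 := hc0 g
    have h2 : (0:ℝ) ≤ dist (act g x₀) x₀ := dist_nonneg
    simp only [deltaTilde]; linarith
  have hdt : ∀ g : G, (deltaFun x₀ act c lam₀) g ≤ (deltaTilde x₀ act c) g := by
    intro g
    have h1 : max (c g) 1 ≤ 1 + c g := by
      have := hc0 g
      apply max_le <;> linarith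
    have h2 : lam₀ * dist (act g x₀) x₀ ≤ dist (act g x₀) x₀ := by
      nlinarith [dist_nonneg (x := act g x₀) (y := x₀)]
    simp only [deltaFun, deltaTilde]; linarith
  have hpact : ∀ (g : G) (z : M), (pfun x₀ lam₀) (act g z) ≤ (deltaFun x₀ act c lam₀) g * (pfun x₀ lam₀) z := by
    intro g z
    have h1 : dist (act g z) x₀ ≤ dist (act g z) (act g x₀) + dist (act g x₀) x₀ :=
      dist_triangle _ _ _
    have h2 : dist (act g z) (act g x₀) ≤ c g * dist z x₀ := hcLip g z x₀
    have h3 : c g ≤ max (c g) 1 := le_max_left _ _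
    have h4 : (1:ℝ) ≤ max (c g) 1 := le_max_right _ _
    have h5 : (0:ℝ) ≤ dist z x₀ := dist_nonneg
    have h6 : (0:ℝ) ≤ dist (act g x₀) x₀ := dist_nonneg
    simp only [pfun, deltaFun]
    nlinarith [mul_nonneg hlam₀.le h5, mul_nonneg hlam₀.le h6,
      mul_nonneg (mul_nonneg hlam₀.le h6) (mul_nonneg hlam₀.le h5)]
  have hcsub : ∀ g h : G, c (g * h) ≤ c g * c h := by
    intro g h
    refine hcMin (g * h) (c g * c h) (mul_nonneg (hc0 g) (hc0 h)) ?_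
    intro x y
    rw [hact, hact]
    calc dist (act g (act h x)) (act g (act h y)) ≤ c g * dist (act h x) (act h y) :=
          hcLip _ _ _
      _ ≤ c g * (c h * dist x y) := mul_le_mul_of_nonneg_left (hcLip _ _ _) (hc0 g)
      _ = c g * c h * dist x y := by ring
  have hdsub : ∀ g h : G, (deltaFun x₀ act c lam₀) (g * h) ≤ (deltaFun x₀ act c lam₀) g * (deltaFun x₀ act c lam₀) h := by
    intro g h
    have hD : dist (act (g * h) x₀) x₀ ≤ c g * dist (act h x₀) x₀ + dist (act g x₀) x₀ := by
      calc dist (act (g * h) x₀) x₀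
          ≤ dist (act (g * h) x₀) (act g x₀) + dist (act g x₀) x₀ := dist_triangle _ _ _
        _ ≤ c g * dist (act h x₀) x₀ + dist (act g x₀) x₀ := by
            have h9 : dist (act (g * h) x₀) (act g x₀) ≤ c g * dist (act h x₀) x₀ := by
              rw [hact]; exact hcLip _ _ _
            linarith
    have hmax : max (c (g * h)) 1 ≤ max (c g) 1 * max (c h) 1 := by
      have h1 : c (g * h) ≤ max (c g) 1 * max (c h) 1 := by
        calc c (g * h) ≤ c g * c h := hcsub g h
          _ ≤ max (c g) 1 * max (c h) 1 :=
            mul_le_mul (le_max_left _ _) (le_max_left _ _) (hc0 h)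
              (le_trans (hc0 g) (le_max_left _ _))
      have h2 : (1:ℝ) ≤ max (c g) 1 * max (c h) 1 := by
        have := le_max_right (c g) 1
        have := le_max_right (c h) 1
        nlinarith
      exact max_le h1 h2
    have h3 : c g ≤ max (c g) 1 := le_max_left _ _
    have h4 : (1:ℝ) ≤ max (c h) 1 := le_max_right _ _
    have h5 : (0:ℝ) ≤ dist (act h x₀) x₀ := dist_nonneg
    have h6 : (0:ℝ) ≤ dist (act g x₀) x₀ := dist_nonneg
    have h7 : (1:ℝ) ≤ max (c g) 1 := le_max_right _ _
    have h8 : (0:ℝ) ≤ c g := hc0 g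
    simp only [deltaFun] at hmax ⊢
    nlinarith [mul_nonneg hlam₀.le h5, mul_nonneg hlam₀.le h6,
      mul_nonneg (mul_nonneg hlam₀.le h6) (mul_nonneg hlam₀.le h5)]
  -- exponent facts
  have hη1 : 1 < η := by nlinarith
  have hη0 : 0 < η := by linarith
  have hηt1 : (0:ℝ) ≤ ηt + 1 := by linarith
  have hγ2 : s + ηt + 1 ≤ 2 * γ₀ := by linarith
  have hηtγ1 : ηt + 1 ≤ γ₀ + 1 := by linarith
  -- measurability
  have hmact : ∀ z : M, Measurable fun g : G => act g z := fun z =>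
    hactm.comp (measurable_id.prodMk measurable_const)
  have hmxi : ∀ z : M, Measurable fun g : G => ξ g z := fun z =>
    hξm.comp (measurable_id.prodMk measurable_const)
  have hmdl : Measurable fun g : G => (deltaFun x₀ act c lam₀) g := by
    apply Measurable.add
    · exact hcm.max measurable_const
    · exact measurable_const.mul ((hmact x₀).dist measurable_const)
  have hmrd : ∀ e : ℝ, 0 ≤ e → Measurable fun g : G => ENNReal.ofReal (c g * (deltaFun x₀ act c lam₀) g ^ e) := by
    intro e he
    exact (hcm.mul ((Real.continuous_rpow_const he).measurable.comp hmdl)).ennreal_ofReal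
  -- probability measures
  have hprob : ∀ n : ℕ, IsProbabilityMeasure (piStar π n) := by
    intro n
    induction n with
    | zero => exact inferInstanceAs (IsProbabilityMeasure π)
    | succ k ih =>
      haveI := ih
      exact Measure.isProbabilityMeasure_map (measurable_mul (M := G)).aemeasurable
  have hmap : ∀ (n : ℕ) (φ : G → ℝ≥0∞), Measurable φ →
      ∫⁻ g, φ g ∂(piStar π (n + 1)) = ∫⁻ g, ∫⁻ h, φ (g * h) ∂(piStar π n) ∂π := by
    intro n φ hφ
    haveI := hprob n
    show ∫⁻ g, φ g ∂(Measure.map (fun q : G × G => q.1 * q.2) (π.prod (piStar π n))) = _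
    rw [lintegral_map hφ measurable_mul]
    exact lintegral_prod _ ((hφ.comp measurable_mul).aemeasurable)
  have hswap : ∀ (n : ℕ) (φ : G → ℝ≥0∞), Measurable φ →
      ∫⁻ h, ∫⁻ g, φ (g * h) ∂π ∂(piStar π n) = ∫⁻ g, φ g ∂(piStar π (n + 1)) := by
    intro n φ hφ
    haveI := hprob n
    rw [hmap n φ hφ]
    exact lintegral_lintegral_swap ((hφ.comp (measurable_snd.mul measurable_fst)).aemeasurable)
  -- constants
  set Mdelta := ∫⁻ g, ENNReal.ofReal ((deltaFun x₀ act c lam₀) g ^ (ηt + 1)) ∂π with hMdelta_def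
  have hMdelta_ne : Mdelta ≠ ⊤ := by
    refine ne_top_of_le_ne_top (ne_of_lt hM) (lintegral_mono fun g => ?_)
    apply ENNReal.ofReal_le_ofReal
    calc (deltaFun x₀ act c lam₀) g ^ (ηt + 1) ≤ (deltaTilde x₀ act c) g ^ (ηt + 1) :=
          Real.rpow_le_rpow (hd0 g).le (hdt g) hηt1
      _ ≤ (deltaTilde x₀ act c) g ^ (γ₀ + 1) := Real.rpow_le_rpow_of_exponent_le (hdt1 g) hηtγ1
  set IS := ∫⁻ g, ENNReal.ofReal (S g * (deltaFun x₀ act c lam₀) g ^ (ηt + 1)) ∂π with hIS_def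
  have hIS_ne : IS ≠ ⊤ := ne_of_lt hIS
  set KIS := ENNReal.ofReal (2 * lam₀ ^ (-s)) * IS with hKIS_def
  have hKIS_ne : KIS ≠ ⊤ := ENNReal.mul_ne_top ENNReal.ofReal_ne_top hIS_ne
  -- recursion inequality for the weight Q
  have hQrec : ∀ (h : G) (x y : M),
      dist (act h x) (act h y) * ((pfun x₀ lam₀) (act h x) + (pfun x₀ lam₀) (act h y)) ^ s * (pfun x₀ lam₀) (act h y) ^ (ηt + 1)
        ≤ (c h * (deltaFun x₀ act c lam₀) h ^ (s + ηt + 1)) *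
          (dist x y * ((pfun x₀ lam₀) x + (pfun x₀ lam₀) y) ^ s * (pfun x₀ lam₀) y ^ (ηt + 1)) := by
    intro h x y
    have h1 : dist (act h x) (act h y) ≤ c h * dist x y := hcLip _ _ _
    have h2 : (pfun x₀ lam₀) (act h x) + (pfun x₀ lam₀) (act h y) ≤ (deltaFun x₀ act c lam₀) h * ((pfun x₀ lam₀) x + (pfun x₀ lam₀) y) := by
      have e1 := hpact h x
      have e2 := hpact h y
      have e3 : (deltaFun x₀ act c lam₀) h * ((pfun x₀ lam₀) x + (pfun x₀ lam₀) y) = (deltaFun x₀ act c lam₀) h * (pfun x₀ lam₀) x + (deltaFun x₀ act c lam₀) h * (pfun x₀ lam₀) y := mul_add _ _ _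
      linarith
    have h3 : ((pfun x₀ lam₀) (act h x) + (pfun x₀ lam₀) (act h y)) ^ s ≤ (deltaFun x₀ act c lam₀) h ^ s * ((pfun x₀ lam₀) x + (pfun x₀ lam₀) y) ^ s := by
      calc ((pfun x₀ lam₀) (act h x) + (pfun x₀ lam₀) (act h y)) ^ s ≤ ((deltaFun x₀ act c lam₀) h * ((pfun x₀ lam₀) x + (pfun x₀ lam₀) y)) ^ s :=
            Real.rpow_le_rpow (add_nonneg (hp0 _).le (hp0 _).le) h2 hs
        _ = (deltaFun x₀ act c lam₀) h ^ s * ((pfun x₀ lam₀) x + (pfun x₀ lam₀) y) ^ s :=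
            Real.mul_rpow (hd0 h).le (add_nonneg (hp0 _).le (hp0 _).le)
    have h4 : (pfun x₀ lam₀) (act h y) ^ (ηt + 1) ≤ (deltaFun x₀ act c lam₀) h ^ (ηt + 1) * (pfun x₀ lam₀) y ^ (ηt + 1) := by
      calc (pfun x₀ lam₀) (act h y) ^ (ηt + 1) ≤ ((deltaFun x₀ act c lam₀) h * (pfun x₀ lam₀) y) ^ (ηt + 1) :=
            Real.rpow_le_rpow (hp0 _).le (hpact h y) hηt1
        _ = (deltaFun x₀ act c lam₀) h ^ (ηt + 1) * (pfun x₀ lam₀) y ^ (ηt + 1) := Real.mul_rpow (hd0 h).le (hp0 y).le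
    have h5 : (deltaFun x₀ act c lam₀) h ^ s * (deltaFun x₀ act c lam₀) h ^ (ηt + 1) = (deltaFun x₀ act c lam₀) h ^ (s + ηt + 1) := by
      rw [← Real.rpow_add (hd0 h)]
      congr 1
      ring
    have hb1 : dist (act h x) (act h y) * ((pfun x₀ lam₀) (act h x) + (pfun x₀ lam₀) (act h y)) ^ s
        ≤ (c h * dist x y) * ((deltaFun x₀ act c lam₀) h ^ s * ((pfun x₀ lam₀) x + (pfun x₀ lam₀) y) ^ s) :=
      mul_le_mul h1 h3 (Real.rpow_nonneg (add_nonneg (hp0 _).le (hp0 _).le) _)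
        (mul_nonneg (hc0 h) dist_nonneg)
    have hb2 : dist (act h x) (act h y) * ((pfun x₀ lam₀) (act h x) + (pfun x₀ lam₀) (act h y)) ^ s *
          (pfun x₀ lam₀) (act h y) ^ (ηt + 1)
        ≤ (c h * dist x y) * ((deltaFun x₀ act c lam₀) h ^ s * ((pfun x₀ lam₀) x + (pfun x₀ lam₀) y) ^ s) *
            ((deltaFun x₀ act c lam₀) h ^ (ηt + 1) * (pfun x₀ lam₀) y ^ (ηt + 1)) :=
      mul_le_mul hb1 h4 (Real.rpow_nonneg (hp0 _).le _)
        (mul_nonneg (mul_nonneg (hc0 h) dist_nonneg)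
          (mul_nonneg (Real.rpow_nonneg (hd0 h).le _)
            (Real.rpow_nonneg (add_nonneg (hp0 _).le (hp0 _).le) _)))
    refine hb2.trans (le_of_eq ?_)
    rw [← h5]
    ring
  -- recursion inequality for wDelta
  have hWrec : ∀ (g : G) (x y : M),
      wDelta x₀ lam₀ η (act g x) (act g y) ≤
        (c g * (deltaFun x₀ act c lam₀) g ^ (2 * γ₀)) * wDelta x₀ lam₀ η x y := by
    intro g x y
    have h1 : dist (act g x) (act g y) ≤ c g * dist x y := hcLip _ _ _
    have h2 : (pfun x₀ lam₀) (act g x) ^ η ≤ (deltaFun x₀ act c lam₀) g ^ η * (pfun x₀ lam₀) x ^ η := by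
      calc (pfun x₀ lam₀) (act g x) ^ η ≤ ((deltaFun x₀ act c lam₀) g * (pfun x₀ lam₀) x) ^ η :=
            Real.rpow_le_rpow (hp0 _).le (hpact g x) hη0.le
        _ = (deltaFun x₀ act c lam₀) g ^ η * (pfun x₀ lam₀) x ^ η := Real.mul_rpow (hd0 g).le (hp0 x).le
    have h3 : (pfun x₀ lam₀) (act g y) ^ η ≤ (deltaFun x₀ act c lam₀) g ^ η * (pfun x₀ lam₀) y ^ η := by
      calc (pfun x₀ lam₀) (act g y) ^ η ≤ ((deltaFun x₀ act c lam₀) g * (pfun x₀ lam₀) y) ^ η :=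
            Real.rpow_le_rpow (hp0 _).le (hpact g y) hη0.le
        _ = (deltaFun x₀ act c lam₀) g ^ η * (pfun x₀ lam₀) y ^ η := Real.mul_rpow (hd0 g).le (hp0 y).le
    have h5 : (deltaFun x₀ act c lam₀) g ^ η * (deltaFun x₀ act c lam₀) g ^ η = (deltaFun x₀ act c lam₀) g ^ (2 * η) := by
      rw [← Real.rpow_add (hd0 g)]
      congr 1
      ring
    have h6 : (deltaFun x₀ act c lam₀) g ^ (2 * η) ≤ (deltaFun x₀ act c lam₀) g ^ (2 * γ₀) :=
      Real.rpow_le_rpow_of_exponent_le (hd1 g) (by linarith)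
    simp only [wDelta]
    have hb1 : dist (act g x) (act g y) * (pfun x₀ lam₀) (act g x) ^ η
        ≤ (c g * dist x y) * ((deltaFun x₀ act c lam₀) g ^ η * (pfun x₀ lam₀) x ^ η) :=
      mul_le_mul h1 h2 (Real.rpow_nonneg (hp0 _).le _) (mul_nonneg (hc0 g) dist_nonneg)
    have hb2 : dist (act g x) (act g y) * (pfun x₀ lam₀) (act g x) ^ η * (pfun x₀ lam₀) (act g y) ^ η
        ≤ (c g * dist x y) * ((deltaFun x₀ act c lam₀) g ^ η * (pfun x₀ lam₀) x ^ η) * ((deltaFun x₀ act c lam₀) g ^ η * (pfun x₀ lam₀) y ^ η) :=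
      mul_le_mul hb1 h3 (Real.rpow_nonneg (hp0 _).le _)
        (mul_nonneg (mul_nonneg (hc0 g) dist_nonneg)
          (mul_nonneg (Real.rpow_nonneg (hd0 g).le _) (Real.rpow_nonneg (hp0 x).le _)))
    calc dist (act g x) (act g y) * (pfun x₀ lam₀) (act g x) ^ η * (pfun x₀ lam₀) (act g y) ^ η
        ≤ (c g * dist x y) * ((deltaFun x₀ act c lam₀) g ^ η * (pfun x₀ lam₀) x ^ η) * ((deltaFun x₀ act c lam₀) g ^ η * (pfun x₀ lam₀) y ^ η) := hb2
      _ = (c g * (deltaFun x₀ act c lam₀) g ^ (2 * η)) * (dist x y * (pfun x₀ lam₀) x ^ η * (pfun x₀ lam₀) y ^ η) := by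
          rw [← h5]; ring
      _ ≤ (c g * (deltaFun x₀ act c lam₀) g ^ (2 * γ₀)) * (dist x y * (pfun x₀ lam₀) x ^ η * (pfun x₀ lam₀) y ^ η) := by
          apply mul_le_mul_of_nonneg_right (mul_le_mul_of_nonneg_left h6 (hc0 g))
          exact mul_nonneg (mul_nonneg dist_nonneg (Real.rpow_nonneg (hp0 x).le _))
            (Real.rpow_nonneg (hp0 y).le _)
    -- base estimate for a single application of Pt
  have hbase : ∀ (t : ℝ) (f : M → ℂ) (Nf : ℝ), 0 ≤ Nf → StronglyMeasurable f →
      (∀ z, ‖f z‖ ≤ Nf * (pfun x₀ lam₀) z ^ (ηt + 1)) → ∀ x y : M,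
      (‖Pt π act ξ t f x - Pt π act ξ t f y‖₊ : ℝ≥0∞) ≤
        (∫⁻ g, (‖f (act g x) - f (act g y)‖₊ : ℝ≥0∞) ∂π)
        + KIS * ENNReal.ofReal (|t| * Nf *
            (dist x y * ((pfun x₀ lam₀) x + (pfun x₀ lam₀) y) ^ s * (pfun x₀ lam₀) y ^ (ηt + 1))) := by
    intro t f Nf hNf0 hsm hg x y
    have hm1 : ∀ z : M, AEStronglyMeasurable
        (fun g : G => Complex.exp (Complex.I * (t * ξ g z)) * f (act g z)) π := by
      intro z
      apply Measurable.aestronglyMeasurable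
      apply Measurable.mul
      · exact Complex.measurable_exp.comp
          (((Complex.measurable_ofReal.comp (hmxi z)).const_mul (t : ℂ)).const_mul Complex.I)
      · exact hsm.measurable.comp (hmact z)
    have hptw : ∀ g : G,
        (‖Complex.exp (Complex.I * (t * ξ g x)) * f (act g x)
          - Complex.exp (Complex.I * (t * ξ g y)) * f (act g y)‖₊ : ℝ≥0∞)
        ≤ (‖f (act g x) - f (act g y)‖₊ : ℝ≥0∞)
          + ENNReal.ofReal (S g * (deltaFun x₀ act c lam₀) g ^ (ηt + 1)) *
            ENNReal.ofReal (2 * lam₀ ^ (-s) * (|t| * Nf *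
              (dist x y * ((pfun x₀ lam₀) x + (pfun x₀ lam₀) y) ^ s * (pfun x₀ lam₀) y ^ (ηt + 1)))) := by
      intro g
      have e3 : ‖Complex.exp (Complex.I * (t * ξ g x)) - Complex.exp (Complex.I * (t * ξ g y))‖
          ≤ 2 * (|t| * (S g * dist x y * (1 + dist x x₀ + dist y x₀) ^ s)) := by
        refine (helper_exp_diff2 t (ξ g x) (ξ g y)).trans ?_
        have e31 : |t * ξ g x - t * ξ g y| = |t| * |ξ g x - ξ g y| := by
          rw [← abs_mul]
          congr 1
          ring
        rw [e31]
        have e32 := hRS2 g x y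
        have e33 : 0 ≤ |t| := abs_nonneg t
        nlinarith [abs_nonneg (ξ g x - ξ g y)]
      have e4 : (1 + dist x x₀ + dist y x₀) ^ s ≤ lam₀ ^ (-s) * ((pfun x₀ lam₀) x + (pfun x₀ lam₀) y) ^ s := by
        have hb : lam₀ * (1 + dist x x₀ + dist y x₀) ≤ (pfun x₀ lam₀) x + (pfun x₀ lam₀) y := by
          simp only [pfun]
          nlinarith [dist_nonneg (x := x) (y := x₀), dist_nonneg (x := y) (y := x₀)]
        have hb2 : 1 + dist x x₀ + dist y x₀ ≤ lam₀⁻¹ * ((pfun x₀ lam₀) x + (pfun x₀ lam₀) y) := by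
          rw [← mul_le_mul_iff_right₀ hlam₀]
          calc lam₀ * (1 + dist x x₀ + dist y x₀) ≤ (pfun x₀ lam₀) x + (pfun x₀ lam₀) y := hb
            _ = lam₀ * (lam₀⁻¹ * ((pfun x₀ lam₀) x + (pfun x₀ lam₀) y)) := by
                field_simp
        calc (1 + dist x x₀ + dist y x₀) ^ s ≤ (lam₀⁻¹ * ((pfun x₀ lam₀) x + (pfun x₀ lam₀) y)) ^ s := by
              apply Real.rpow_le_rpow _ hb2 hs
              have := dist_nonneg (x := x) (y := x₀)
              have := dist_nonneg (x := y) (y := x₀)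
              linarith
          _ = lam₀⁻¹ ^ s * ((pfun x₀ lam₀) x + (pfun x₀ lam₀) y) ^ s :=
              Real.mul_rpow (inv_nonneg.mpr hlam₀.le) (add_nonneg (hp0 x).le (hp0 y).le)
          _ = lam₀ ^ (-s) * ((pfun x₀ lam₀) x + (pfun x₀ lam₀) y) ^ s := by
              rw [Real.inv_rpow hlam₀.le, ← Real.rpow_neg hlam₀.le]
      have e5 : ‖f (act g y)‖ ≤ Nf * ((deltaFun x₀ act c lam₀) g ^ (ηt + 1) * (pfun x₀ lam₀) y ^ (ηt + 1)) := by
        refine (hg (act g y)).trans ?_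
        apply mul_le_mul_of_nonneg_left _ hNf0
        calc (pfun x₀ lam₀) (act g y) ^ (ηt + 1) ≤ ((deltaFun x₀ act c lam₀) g * (pfun x₀ lam₀) y) ^ (ηt + 1) :=
              Real.rpow_le_rpow (hp0 _).le (hpact g y) hηt1
          _ = (deltaFun x₀ act c lam₀) g ^ (ηt + 1) * (pfun x₀ lam₀) y ^ (ηt + 1) := Real.mul_rpow (hd0 g).le (hp0 y).le
      have hreal : ‖Complex.exp (Complex.I * (t * ξ g x)) * f (act g x)
            - Complex.exp (Complex.I * (t * ξ g y)) * f (act g y)‖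
          ≤ ‖f (act g x) - f (act g y)‖
            + (S g * (deltaFun x₀ act c lam₀) g ^ (ηt + 1)) * (2 * lam₀ ^ (-s) * (|t| * Nf *
              (dist x y * ((pfun x₀ lam₀) x + (pfun x₀ lam₀) y) ^ s * (pfun x₀ lam₀) y ^ (ηt + 1)))) := by
        have e1 : Complex.exp (Complex.I * (t * ξ g x)) * f (act g x)
              - Complex.exp (Complex.I * (t * ξ g y)) * f (act g y)
            = Complex.exp (Complex.I * (t * ξ g x)) * (f (act g x) - f (act g y))
              + (Complex.exp (Complex.I * (t * ξ g x))
                 - Complex.exp (Complex.I * (t * ξ g y))) * f (act g y) := by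
          ring
        have e2 : ‖Complex.exp (Complex.I * (t * ξ g x)) * f (act g x)
              - Complex.exp (Complex.I * (t * ξ g y)) * f (act g y)‖
            ≤ ‖f (act g x) - f (act g y)‖
              + ‖Complex.exp (Complex.I * (t * ξ g x))
                  - Complex.exp (Complex.I * (t * ξ g y))‖ * ‖f (act g y)‖ := by
          rw [e1]
          refine (norm_add_le _ _).trans ?_
          rw [norm_mul, norm_mul, helper_norm_exp2, one_mul]
        have e6 : ‖Complex.exp (Complex.I * (t * ξ g x))
              - Complex.exp (Complex.I * (t * ξ g y))‖ * ‖f (act g y)‖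
            ≤ (2 * (|t| * (S g * dist x y * ((1 + dist x x₀ + dist y x₀) ^ s))))
              * (Nf * ((deltaFun x₀ act c lam₀) g ^ (ηt + 1) * (pfun x₀ lam₀) y ^ (ηt + 1))) := by
          apply mul_le_mul e3 e5 (norm_nonneg _)
          apply mul_nonneg (by norm_num)
          apply mul_nonneg (abs_nonneg t)
          apply mul_nonneg (mul_nonneg (hS0 g) dist_nonneg)
          apply Real.rpow_nonneg
          have := dist_nonneg (x := x) (y := x₀)
          have := dist_nonneg (x := y) (y := x₀)
          linarith
        have e7 : (2 * (|t| * (S g * dist x y * ((1 + dist x x₀ + dist y x₀) ^ s))))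
              * (Nf * ((deltaFun x₀ act c lam₀) g ^ (ηt + 1) * (pfun x₀ lam₀) y ^ (ηt + 1)))
            ≤ (2 * (|t| * (S g * dist x y * (lam₀ ^ (-s) * ((pfun x₀ lam₀) x + (pfun x₀ lam₀) y) ^ s))))
              * (Nf * ((deltaFun x₀ act c lam₀) g ^ (ηt + 1) * (pfun x₀ lam₀) y ^ (ηt + 1))) := by
          apply mul_le_mul_of_nonneg_right _ (mul_nonneg hNf0
            (mul_nonneg (Real.rpow_nonneg (hd0 g).le _) (Real.rpow_nonneg (hp0 y).le _)))
          apply mul_le_mul_of_nonneg_left _ (by norm_num : (0:ℝ) ≤ 2)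
          apply mul_le_mul_of_nonneg_left _ (abs_nonneg t)
          exact mul_le_mul_of_nonneg_left e4 (mul_nonneg (hS0 g) dist_nonneg)
        have e8 : (2 * (|t| * (S g * dist x y * (lam₀ ^ (-s) * ((pfun x₀ lam₀) x + (pfun x₀ lam₀) y) ^ s))))
              * (Nf * ((deltaFun x₀ act c lam₀) g ^ (ηt + 1) * (pfun x₀ lam₀) y ^ (ηt + 1)))
            = (S g * (deltaFun x₀ act c lam₀) g ^ (ηt + 1)) * (2 * lam₀ ^ (-s) * (|t| * Nf *
              (dist x y * ((pfun x₀ lam₀) x + (pfun x₀ lam₀) y) ^ s * (pfun x₀ lam₀) y ^ (ηt + 1)))) := by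
          ring
        linarith [e2, e6.trans (e7.trans_eq e8)]
      calc (‖Complex.exp (Complex.I * (t * ξ g x)) * f (act g x)
          - Complex.exp (Complex.I * (t * ξ g y)) * f (act g y)‖₊ : ℝ≥0∞)
          = ENNReal.ofReal ‖Complex.exp (Complex.I * (t * ξ g x)) * f (act g x)
            - Complex.exp (Complex.I * (t * ξ g y)) * f (act g y)‖ :=
            (ofReal_norm_eq_coe_nnnorm _).symm
        _ ≤ ENNReal.ofReal (‖f (act g x) - f (act g y)‖
            + (S g * (deltaFun x₀ act c lam₀) g ^ (ηt + 1)) * (2 * lam₀ ^ (-s) * (|t| * Nf *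
              (dist x y * ((pfun x₀ lam₀) x + (pfun x₀ lam₀) y) ^ s * (pfun x₀ lam₀) y ^ (ηt + 1))))) :=
            ENNReal.ofReal_le_ofReal hreal
        _ ≤ ENNReal.ofReal ‖f (act g x) - f (act g y)‖
            + ENNReal.ofReal ((S g * (deltaFun x₀ act c lam₀) g ^ (ηt + 1)) * (2 * lam₀ ^ (-s) * (|t| * Nf *
              (dist x y * ((pfun x₀ lam₀) x + (pfun x₀ lam₀) y) ^ s * (pfun x₀ lam₀) y ^ (ηt + 1))))) := ENNReal.ofReal_add_le
        _ = (‖f (act g x) - f (act g y)‖₊ : ℝ≥0∞)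
            + ENNReal.ofReal (S g * (deltaFun x₀ act c lam₀) g ^ (ηt + 1)) *
              ENNReal.ofReal (2 * lam₀ ^ (-s) * (|t| * Nf *
                (dist x y * ((pfun x₀ lam₀) x + (pfun x₀ lam₀) y) ^ s * (pfun x₀ lam₀) y ^ (ηt + 1)))) := by
            rw [ofReal_norm_eq_coe_nnnorm, ENNReal.ofReal_mul
              (mul_nonneg (hS0 g) (Real.rpow_nonneg (hd0 g).le _))]
    have hφ1m : Measurable fun g : G => (‖f (act g x) - f (act g y)‖₊ : ℝ≥0∞) :=
      ((hsm.measurable.comp (hmact x)).sub (hsm.measurable.comp (hmact y))).enorm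
    simp only [Pt]
    calc (‖(∫ g, Complex.exp (Complex.I * (t * ξ g x)) * f (act g x) ∂π)
            - ∫ g, Complex.exp (Complex.I * (t * ξ g y)) * f (act g y) ∂π‖₊ : ℝ≥0∞)
        ≤ ∫⁻ g, ‖Complex.exp (Complex.I * (t * ξ g x)) * f (act g x)
            - Complex.exp (Complex.I * (t * ξ g y)) * f (act g y)‖₊ ∂π :=
          helper_int_diff _ _ (hm1 x) (hm1 y)
      _ ≤ ∫⁻ g, ((‖f (act g x) - f (act g y)‖₊ : ℝ≥0∞)
            + ENNReal.ofReal (S g * (deltaFun x₀ act c lam₀) g ^ (ηt + 1)) *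
              ENNReal.ofReal (2 * lam₀ ^ (-s) * (|t| * Nf *
                (dist x y * ((pfun x₀ lam₀) x + (pfun x₀ lam₀) y) ^ s * (pfun x₀ lam₀) y ^ (ηt + 1))))) ∂π :=
          lintegral_mono hptw
      _ = (∫⁻ g, (‖f (act g x) - f (act g y)‖₊ : ℝ≥0∞) ∂π)
          + (∫⁻ g, ENNReal.ofReal (S g * (deltaFun x₀ act c lam₀) g ^ (ηt + 1)) ∂π) *
            ENNReal.ofReal (2 * lam₀ ^ (-s) * (|t| * Nf *
              (dist x y * ((pfun x₀ lam₀) x + (pfun x₀ lam₀) y) ^ s * (pfun x₀ lam₀) y ^ (ηt + 1)))) := by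
          rw [lintegral_add_left hφ1m, lintegral_mul_const' _ _ ENNReal.ofReal_ne_top]
      _ = (∫⁻ g, (‖f (act g x) - f (act g y)‖₊ : ℝ≥0∞) ∂π)
          + KIS * ENNReal.ofReal (|t| * Nf *
              (dist x y * ((pfun x₀ lam₀) x + (pfun x₀ lam₀) y) ^ s * (pfun x₀ lam₀) y ^ (ηt + 1))) := by
          rw [hKIS_def, ENNReal.ofReal_mul (by positivity : (0:ℝ) ≤ 2 * lam₀ ^ (-s))]
          ring
    -- growth bound for Pt f
  have hPtgrow : ∀ (t : ℝ) (f : M → ℂ) (Nf : ℝ), 0 ≤ Nf → StronglyMeasurable f →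
      (∀ z, ‖f z‖ ≤ Nf * (pfun x₀ lam₀) z ^ (ηt + 1)) →
      ∀ z, ‖Pt π act ξ t f z‖ ≤ Mdelta.toReal * Nf * (pfun x₀ lam₀) z ^ (ηt + 1) := by
    intro t f Nf hNf0 hsm hg z
    have h1 : (‖Pt π act ξ t f z‖₊ : ℝ≥0∞) ≤
        ∫⁻ g, ‖Complex.exp (Complex.I * (t * ξ g z)) * f (act g z)‖₊ ∂π := by
      simp only [Pt]
      exact enorm_integral_le_lintegral_enorm _
    have h2 : ∀ g : G, (‖Complex.exp (Complex.I * (t * ξ g z)) * f (act g z)‖₊ : ℝ≥0∞)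
        ≤ ENNReal.ofReal ((deltaFun x₀ act c lam₀) g ^ (ηt + 1)) * ENNReal.ofReal (Nf * (pfun x₀ lam₀) z ^ (ηt + 1)) := by
      intro g
      rw [← ofReal_norm_eq_coe_nnnorm, norm_mul, helper_norm_exp2, one_mul,
        ← ENNReal.ofReal_mul (Real.rpow_nonneg (hd0 g).le _)]
      apply ENNReal.ofReal_le_ofReal
      calc ‖f (act g z)‖ ≤ Nf * (pfun x₀ lam₀) (act g z) ^ (ηt + 1) := hg _
        _ ≤ Nf * ((deltaFun x₀ act c lam₀) g ^ (ηt + 1) * (pfun x₀ lam₀) z ^ (ηt + 1)) := by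
            apply mul_le_mul_of_nonneg_left _ hNf0
            calc (pfun x₀ lam₀) (act g z) ^ (ηt + 1) ≤ ((deltaFun x₀ act c lam₀) g * (pfun x₀ lam₀) z) ^ (ηt + 1) :=
                  Real.rpow_le_rpow (hp0 _).le (hpact g z) hηt1
              _ = (deltaFun x₀ act c lam₀) g ^ (ηt + 1) * (pfun x₀ lam₀) z ^ (ηt + 1) := Real.mul_rpow (hd0 g).le (hp0 z).le
        _ = (deltaFun x₀ act c lam₀) g ^ (ηt + 1) * (Nf * (pfun x₀ lam₀) z ^ (ηt + 1)) := by ring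
    have h3 : (‖Pt π act ξ t f z‖₊ : ℝ≥0∞) ≤
        Mdelta * ENNReal.ofReal (Nf * (pfun x₀ lam₀) z ^ (ηt + 1)) := by
      refine h1.trans ?_
      calc ∫⁻ g, ‖Complex.exp (Complex.I * (t * ξ g z)) * f (act g z)‖₊ ∂π
          ≤ ∫⁻ g, ENNReal.ofReal ((deltaFun x₀ act c lam₀) g ^ (ηt + 1)) *
              ENNReal.ofReal (Nf * (pfun x₀ lam₀) z ^ (ηt + 1)) ∂π := lintegral_mono h2
        _ = Mdelta * ENNReal.ofReal (Nf * (pfun x₀ lam₀) z ^ (ηt + 1)) := by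
            rw [hMdelta_def]
            exact lintegral_mul_const' _ _ ENNReal.ofReal_ne_top
    have h4 := ENNReal.toReal_mono (ENNReal.mul_ne_top hMdelta_ne ENNReal.ofReal_ne_top) h3
    rw [ENNReal.toReal_mul, ENNReal.toReal_ofReal
      (mul_nonneg hNf0 (Real.rpow_nonneg (hp0 z).le _)), ENNReal.coe_toReal, coe_nnnorm] at h4
    calc ‖Pt π act ξ t f z‖ ≤ Mdelta.toReal * (Nf * (pfun x₀ lam₀) z ^ (ηt + 1)) := h4
      _ = Mdelta.toReal * Nf * (pfun x₀ lam₀) z ^ (ηt + 1) := by ring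
  -- strong measurability of Pt f
  have hPtsm : ∀ (t : ℝ) (f : M → ℂ), StronglyMeasurable f →
      StronglyMeasurable (Pt π act ξ t f) := by
    intro t f hsm
    have h : StronglyMeasurable fun q : M × G =>
        Complex.exp (Complex.I * (t * ξ q.2 q.1)) * f (act q.2 q.1) := by
      apply Measurable.stronglyMeasurable
      apply Measurable.mul
      · exact Complex.measurable_exp.comp
          (((Complex.measurable_ofReal.comp (hξm.comp measurable_swap)).const_mul
            (t : ℂ)).const_mul Complex.I)
      · exact hsm.measurable.comp (hactm.comp measurable_swap)
    exact h.integral_prod_right'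
  -- finiteness of the c·δ^(s+ηt+1) integrals
  have hJpi : ∫⁻ g, ENNReal.ofReal (c g * (deltaFun x₀ act c lam₀) g ^ (s + ηt + 1)) ∂π ≠ ⊤ := by
    refine ne_top_of_le_ne_top (ne_of_lt hM') (lintegral_mono fun g => ?_)
    apply ENNReal.ofReal_le_ofReal
    apply mul_le_mul_of_nonneg_left _ (hc0 g)
    calc (deltaFun x₀ act c lam₀) g ^ (s + ηt + 1) ≤ (deltaTilde x₀ act c) g ^ (s + ηt + 1) :=
          Real.rpow_le_rpow (hd0 g).le (hdt g) (by linarith)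
      _ ≤ (deltaTilde x₀ act c) g ^ (2 * γ₀) := Real.rpow_le_rpow_of_exponent_le (hdt1 g) hγ2
  have hJ : ∀ n : ℕ, ∫⁻ g, ENNReal.ofReal (c g * (deltaFun x₀ act c lam₀) g ^ (s + ηt + 1)) ∂(piStar π n) ≠ ⊤ := by
    intro n
    induction n with
    | zero => exact hJpi
    | succ k ih =>
      have hDm : Measurable fun g : G => ENNReal.ofReal (c g * (deltaFun x₀ act c lam₀) g ^ (s + ηt + 1)) :=
        hmrd _ (by linarith)
      rw [hmap k _ hDm]
      have hb : ∀ g h : G, ENNReal.ofReal (c (g * h) * (deltaFun x₀ act c lam₀) (g * h) ^ (s + ηt + 1))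
          ≤ ENNReal.ofReal (c g * (deltaFun x₀ act c lam₀) g ^ (s + ηt + 1)) *
            ENNReal.ofReal (c h * (deltaFun x₀ act c lam₀) h ^ (s + ηt + 1)) := by
        intro g h
        rw [← ENNReal.ofReal_mul (mul_nonneg (hc0 g) (Real.rpow_nonneg (hd0 g).le _))]
        apply ENNReal.ofReal_le_ofReal
        calc c (g * h) * (deltaFun x₀ act c lam₀) (g * h) ^ (s + ηt + 1)
            ≤ (c g * c h) * (((deltaFun x₀ act c lam₀) g * (deltaFun x₀ act c lam₀) h) ^ (s + ηt + 1)) := by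
              apply mul_le_mul (hcsub g h) _ (Real.rpow_nonneg (hd0 _).le _)
                (mul_nonneg (hc0 g) (hc0 h))
              exact Real.rpow_le_rpow (hd0 _).le (hdsub g h) (by linarith)
          _ = (c g * (deltaFun x₀ act c lam₀) g ^ (s + ηt + 1)) * (c h * (deltaFun x₀ act c lam₀) h ^ (s + ηt + 1)) := by
              rw [Real.mul_rpow (hd0 g).le (hd0 h).le]
              ring
      refine ne_top_of_le_ne_top (ENNReal.mul_ne_top hJpi ih) ?_
      calc ∫⁻ g, ∫⁻ h, ENNReal.ofReal (c (g * h) * (deltaFun x₀ act c lam₀) (g * h) ^ (s + ηt + 1)) ∂(piStar π k) ∂π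
          ≤ ∫⁻ g, ∫⁻ h, ENNReal.ofReal (c g * (deltaFun x₀ act c lam₀) g ^ (s + ηt + 1)) *
              ENNReal.ofReal (c h * (deltaFun x₀ act c lam₀) h ^ (s + ηt + 1)) ∂(piStar π k) ∂π :=
            lintegral_mono fun g => lintegral_mono fun h => hb g h
        _ = ∫⁻ g, ENNReal.ofReal (c g * (deltaFun x₀ act c lam₀) g ^ (s + ηt + 1)) *
              (∫⁻ h, ENNReal.ofReal (c h * (deltaFun x₀ act c lam₀) h ^ (s + ηt + 1)) ∂(piStar π k)) ∂π :=
            lintegral_congr fun g => lintegral_const_mul' _ _ ENNReal.ofReal_ne_top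
        _ = (∫⁻ g, ENNReal.ofReal (c g * (deltaFun x₀ act c lam₀) g ^ (s + ηt + 1)) ∂π) *
              (∫⁻ h, ENNReal.ofReal (c h * (deltaFun x₀ act c lam₀) h ^ (s + ηt + 1)) ∂(piStar π k)) :=
            lintegral_mul_const' _ _ ih
    -- main inductive estimate
  have hdiff : ∀ n : ℕ, ∃ A : ℝ≥0∞, A ≠ ⊤ ∧ ∀ (t : ℝ) (f : M → ℂ) (Nf : ℝ),
      0 ≤ Nf → StronglyMeasurable f → (∀ z, ‖f z‖ ≤ Nf * (pfun x₀ lam₀) z ^ (ηt + 1)) →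
      ∀ x y : M,
      (‖(Pt π act ξ t)^[n + 1] f x - (Pt π act ξ t)^[n + 1] f y‖₊ : ℝ≥0∞) ≤
        (∫⁻ g, (‖f (act g x) - f (act g y)‖₊ : ℝ≥0∞) ∂(piStar π n))
        + A * ENNReal.ofReal (|t| * Nf *
            (dist x y * ((pfun x₀ lam₀) x + (pfun x₀ lam₀) y) ^ s * (pfun x₀ lam₀) y ^ (ηt + 1))) := by
    intro n
    induction n with
    | zero =>
      refine ⟨KIS, hKIS_ne, ?_⟩
      intro t f Nf hNf0 hsm hg x y
      have h := hbase t f Nf hNf0 hsm hg x y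
      simpa [Function.iterate_one, piStar] using h
    | succ k ih =>
      obtain ⟨A, hA, ihA⟩ := ih
      refine ⟨A * ENNReal.ofReal Mdelta.toReal +
        KIS * ∫⁻ g, ENNReal.ofReal (c g * (deltaFun x₀ act c lam₀) g ^ (s + ηt + 1)) ∂(piStar π k),
        ENNReal.add_ne_top.mpr ⟨ENNReal.mul_ne_top hA ENNReal.ofReal_ne_top,
          ENNReal.mul_ne_top hKIS_ne (hJ k)⟩, ?_⟩
      intro t f Nf hNf0 hsm hg x y
      have hit : (Pt π act ξ t)^[k + 1 + 1] f x = (Pt π act ξ t)^[k + 1] (Pt π act ξ t f) x := by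
        rw [Function.iterate_succ_apply]
      have hit' : (Pt π act ξ t)^[k + 1 + 1] f y = (Pt π act ξ t)^[k + 1] (Pt π act ξ t f) y := by
        rw [Function.iterate_succ_apply]
      rw [hit, hit']
      have hMd0 : 0 ≤ Mdelta.toReal := ENNReal.toReal_nonneg
      have step1 := ihA t (Pt π act ξ t f) (Mdelta.toReal * Nf) (mul_nonneg hMd0 hNf0)
        (hPtsm t f hsm) (hPtgrow t f Nf hNf0 hsm hg) x y
      have hterm2 : A * ENNReal.ofReal (|t| * (Mdelta.toReal * Nf) *
            (dist x y * ((pfun x₀ lam₀) x + (pfun x₀ lam₀) y) ^ s * (pfun x₀ lam₀) y ^ (ηt + 1)))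
          = A * ENNReal.ofReal Mdelta.toReal * ENNReal.ofReal (|t| * Nf *
            (dist x y * ((pfun x₀ lam₀) x + (pfun x₀ lam₀) y) ^ s * (pfun x₀ lam₀) y ^ (ηt + 1))) := by
        have h9 : ENNReal.ofReal (|t| * (Mdelta.toReal * Nf) *
              (dist x y * ((pfun x₀ lam₀) x + (pfun x₀ lam₀) y) ^ s * (pfun x₀ lam₀) y ^ (ηt + 1)))
            = ENNReal.ofReal Mdelta.toReal * ENNReal.ofReal (|t| * Nf *
              (dist x y * ((pfun x₀ lam₀) x + (pfun x₀ lam₀) y) ^ s * (pfun x₀ lam₀) y ^ (ηt + 1))) := by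
          rw [← ENNReal.ofReal_mul hMd0]
          congr 1
          ring
        rw [h9, ← mul_assoc]
      rw [hterm2] at step1
      -- pointwise bound for the inner function
      have hptw : ∀ h : G, (‖Pt π act ξ t f (act h x) - Pt π act ξ t f (act h y)‖₊ : ℝ≥0∞)
          ≤ (∫⁻ g, (‖f (act g (act h x)) - f (act g (act h y))‖₊ : ℝ≥0∞) ∂π)
            + ENNReal.ofReal (c h * (deltaFun x₀ act c lam₀) h ^ (s + ηt + 1)) *
              (KIS * ENNReal.ofReal (|t| * Nf *
                (dist x y * ((pfun x₀ lam₀) x + (pfun x₀ lam₀) y) ^ s * (pfun x₀ lam₀) y ^ (ηt + 1)))) := by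
        intro h
        refine (hbase t f Nf hNf0 hsm hg (act h x) (act h y)).trans (add_le_add_right ?_ _)
        have hqr : |t| * Nf * (dist (act h x) (act h y) *
              ((pfun x₀ lam₀) (act h x) + (pfun x₀ lam₀) (act h y)) ^ s * (pfun x₀ lam₀) (act h y) ^ (ηt + 1))
            ≤ (c h * (deltaFun x₀ act c lam₀) h ^ (s + ηt + 1)) * (|t| * Nf *
              (dist x y * ((pfun x₀ lam₀) x + (pfun x₀ lam₀) y) ^ s * (pfun x₀ lam₀) y ^ (ηt + 1))) := by
          have hq := hQrec h x y
          have h2 : 0 ≤ |t| * Nf := mul_nonneg (abs_nonneg t) hNf0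
          calc |t| * Nf * (dist (act h x) (act h y) *
                ((pfun x₀ lam₀) (act h x) + (pfun x₀ lam₀) (act h y)) ^ s * (pfun x₀ lam₀) (act h y) ^ (ηt + 1))
              ≤ |t| * Nf * ((c h * (deltaFun x₀ act c lam₀) h ^ (s + ηt + 1)) *
                (dist x y * ((pfun x₀ lam₀) x + (pfun x₀ lam₀) y) ^ s * (pfun x₀ lam₀) y ^ (ηt + 1))) :=
                mul_le_mul_of_nonneg_left hq h2
            _ = (c h * (deltaFun x₀ act c lam₀) h ^ (s + ηt + 1)) * (|t| * Nf *
                (dist x y * ((pfun x₀ lam₀) x + (pfun x₀ lam₀) y) ^ s * (pfun x₀ lam₀) y ^ (ηt + 1))) := by ring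
        calc KIS * ENNReal.ofReal (|t| * Nf * (dist (act h x) (act h y) *
              ((pfun x₀ lam₀) (act h x) + (pfun x₀ lam₀) (act h y)) ^ s * (pfun x₀ lam₀) (act h y) ^ (ηt + 1)))
            ≤ KIS * ENNReal.ofReal ((c h * (deltaFun x₀ act c lam₀) h ^ (s + ηt + 1)) * (|t| * Nf *
              (dist x y * ((pfun x₀ lam₀) x + (pfun x₀ lam₀) y) ^ s * (pfun x₀ lam₀) y ^ (ηt + 1)))) :=
              mul_le_mul_right (ENNReal.ofReal_le_ofReal hqr) KIS
          _ = ENNReal.ofReal (c h * (deltaFun x₀ act c lam₀) h ^ (s + ηt + 1)) *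
              (KIS * ENNReal.ofReal (|t| * Nf *
                (dist x y * ((pfun x₀ lam₀) x + (pfun x₀ lam₀) y) ^ s * (pfun x₀ lam₀) y ^ (ηt + 1)))) := by
              rw [ENNReal.ofReal_mul (mul_nonneg (hc0 h) (Real.rpow_nonneg (hd0 h).le _))]
              ring
      -- integrate the pointwise bound
      have hΦm : Measurable fun q : G × G =>
          (‖f (act q.1 (act q.2 x)) - f (act q.1 (act q.2 y))‖₊ : ℝ≥0∞) := by
        have hax : Measurable fun q : G × G => act q.1 (act q.2 x) :=
          hactm.comp (measurable_fst.prodMk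
            (hactm.comp (measurable_snd.prodMk measurable_const)))
        have hay : Measurable fun q : G × G => act q.1 (act q.2 y) :=
          hactm.comp (measurable_fst.prodMk
            (hactm.comp (measurable_snd.prodMk measurable_const)))
        exact ((hsm.measurable.comp hax).sub (hsm.measurable.comp hay)).enorm
      have hφm : Measurable fun g : G => (‖f (act g x) - f (act g y)‖₊ : ℝ≥0∞) :=
        ((hsm.measurable.comp (hmact x)).sub (hsm.measurable.comp (hmact y))).enorm
      have hchange : ∫⁻ h, ∫⁻ g, (‖f (act g (act h x)) - f (act g (act h y))‖₊ : ℝ≥0∞) ∂π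
            ∂(piStar π k)
          = ∫⁻ g, (‖f (act g x) - f (act g y)‖₊ : ℝ≥0∞) ∂(piStar π (k + 1)) := by
        have heq : ∀ h g : G, (‖f (act g (act h x)) - f (act g (act h y))‖₊ : ℝ≥0∞)
            = (‖f (act (g * h) x) - f (act (g * h) y)‖₊ : ℝ≥0∞) := by
          intro h g
          rw [hact, hact]
        calc ∫⁻ h, ∫⁻ g, (‖f (act g (act h x)) - f (act g (act h y))‖₊ : ℝ≥0∞) ∂π ∂(piStar π k)
            = ∫⁻ h, ∫⁻ g, (‖f (act (g * h) x) - f (act (g * h) y)‖₊ : ℝ≥0∞) ∂π ∂(piStar π k) := by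
              apply lintegral_congr
              intro h
              apply lintegral_congr
              intro g
              exact heq h g
          _ = ∫⁻ g, (‖f (act g x) - f (act g y)‖₊ : ℝ≥0∞) ∂(piStar π (k + 1)) :=
              hswap k _ hφm
      have hconst_ne : KIS * ENNReal.ofReal (|t| * Nf *
          (dist x y * ((pfun x₀ lam₀) x + (pfun x₀ lam₀) y) ^ s * (pfun x₀ lam₀) y ^ (ηt + 1))) ≠ ⊤ :=
        ENNReal.mul_ne_top hKIS_ne ENNReal.ofReal_ne_top
      have key2 : (∫⁻ h, (‖Pt π act ξ t f (act h x) - Pt π act ξ t f (act h y)‖₊ : ℝ≥0∞)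
            ∂(piStar π k))
          ≤ (∫⁻ g, (‖f (act g x) - f (act g y)‖₊ : ℝ≥0∞) ∂(piStar π (k + 1)))
            + KIS * (∫⁻ g, ENNReal.ofReal (c g * (deltaFun x₀ act c lam₀) g ^ (s + ηt + 1)) ∂(piStar π k)) *
              ENNReal.ofReal (|t| * Nf *
                (dist x y * ((pfun x₀ lam₀) x + (pfun x₀ lam₀) y) ^ s * (pfun x₀ lam₀) y ^ (ηt + 1))) := by
        calc (∫⁻ h, (‖Pt π act ξ t f (act h x) - Pt π act ξ t f (act h y)‖₊ : ℝ≥0∞)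
              ∂(piStar π k))
            ≤ ∫⁻ h, ((∫⁻ g, (‖f (act g (act h x)) - f (act g (act h y))‖₊ : ℝ≥0∞) ∂π)
              + ENNReal.ofReal (c h * (deltaFun x₀ act c lam₀) h ^ (s + ηt + 1)) *
                (KIS * ENNReal.ofReal (|t| * Nf *
                  (dist x y * ((pfun x₀ lam₀) x + (pfun x₀ lam₀) y) ^ s * (pfun x₀ lam₀) y ^ (ηt + 1))))) ∂(piStar π k) :=
              lintegral_mono hptw
          _ = (∫⁻ h, ∫⁻ g, (‖f (act g (act h x)) - f (act g (act h y))‖₊ : ℝ≥0∞) ∂π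
                ∂(piStar π k))
              + (∫⁻ h, ENNReal.ofReal (c h * (deltaFun x₀ act c lam₀) h ^ (s + ηt + 1)) *
                (KIS * ENNReal.ofReal (|t| * Nf *
                  (dist x y * ((pfun x₀ lam₀) x + (pfun x₀ lam₀) y) ^ s * (pfun x₀ lam₀) y ^ (ηt + 1)))) ∂(piStar π k)) := by
              rw [lintegral_add_right]
              exact (hmrd _ (by linarith)).mul_const _
          _ = (∫⁻ g, (‖f (act g x) - f (act g y)‖₊ : ℝ≥0∞) ∂(piStar π (k + 1)))
              + (∫⁻ h, ENNReal.ofReal (c h * (deltaFun x₀ act c lam₀) h ^ (s + ηt + 1)) ∂(piStar π k)) *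
                (KIS * ENNReal.ofReal (|t| * Nf *
                  (dist x y * ((pfun x₀ lam₀) x + (pfun x₀ lam₀) y) ^ s * (pfun x₀ lam₀) y ^ (ηt + 1)))) := by
              rw [hchange, lintegral_mul_const' _ _ hconst_ne]
          _ = (∫⁻ g, (‖f (act g x) - f (act g y)‖₊ : ℝ≥0∞) ∂(piStar π (k + 1)))
              + KIS * (∫⁻ g, ENNReal.ofReal (c g * (deltaFun x₀ act c lam₀) g ^ (s + ηt + 1)) ∂(piStar π k)) *
                ENNReal.ofReal (|t| * Nf *
                  (dist x y * ((pfun x₀ lam₀) x + (pfun x₀ lam₀) y) ^ s * (pfun x₀ lam₀) y ^ (ηt + 1))) := by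
              ring
      refine step1.trans ?_
      calc (∫⁻ h, (‖Pt π act ξ t f (act h x) - Pt π act ξ t f (act h y)‖₊ : ℝ≥0∞)
            ∂(piStar π k))
            + A * ENNReal.ofReal Mdelta.toReal * ENNReal.ofReal (|t| * Nf *
              (dist x y * ((pfun x₀ lam₀) x + (pfun x₀ lam₀) y) ^ s * (pfun x₀ lam₀) y ^ (ηt + 1)))
          ≤ ((∫⁻ g, (‖f (act g x) - f (act g y)‖₊ : ℝ≥0∞) ∂(piStar π (k + 1)))
              + KIS * (∫⁻ g, ENNReal.ofReal (c g * (deltaFun x₀ act c lam₀) g ^ (s + ηt + 1)) ∂(piStar π k)) *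
                ENNReal.ofReal (|t| * Nf *
                  (dist x y * ((pfun x₀ lam₀) x + (pfun x₀ lam₀) y) ^ s * (pfun x₀ lam₀) y ^ (ηt + 1))))
            + A * ENNReal.ofReal Mdelta.toReal * ENNReal.ofReal (|t| * Nf *
              (dist x y * ((pfun x₀ lam₀) x + (pfun x₀ lam₀) y) ^ s * (pfun x₀ lam₀) y ^ (ηt + 1))) :=
            add_le_add_left key2 _
        _ = (∫⁻ g, (‖f (act g x) - f (act g y)‖₊ : ℝ≥0∞) ∂(piStar π (k + 1)))
            + (A * ENNReal.ofReal Mdelta.toReal +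
              KIS * ∫⁻ g, ENNReal.ofReal (c g * (deltaFun x₀ act c lam₀) g ^ (s + ηt + 1)) ∂(piStar π k)) *
              ENNReal.ofReal (|t| * Nf *
                (dist x y * ((pfun x₀ lam₀) x + (pfun x₀ lam₀) y) ^ s * (pfun x₀ lam₀) y ^ (ηt + 1))) := by
            ring
    -- conclusion
  obtain ⟨A, hA_ne, hkey⟩ := hdiff n₀
  have hθ0 : 0 ≤ theta0 x₀ act c π lam₀ γ₀ n₀ := by
    apply integral_nonneg
    intro g
    exact mul_nonneg (hc0 g) (Real.rpow_nonneg (hd0 g).le _)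
  have hw0 : ∀ x y : M, 0 ≤ wDelta x₀ lam₀ η x y := by
    intro x y
    exact mul_nonneg (mul_nonneg dist_nonneg (Real.rpow_nonneg (hp0 x).le _))
      (Real.rpow_nonneg (hp0 y).le _)
  have hwpos : ∀ x y : M, x ≠ y → 0 < wDelta x₀ lam₀ η x y := by
    intro x y hxy
    exact mul_pos (mul_pos (dist_pos.mpr hxy) (Real.rpow_pos_of_pos (hp0 x) _))
      (Real.rpow_pos_of_pos (hp0 y) _)
  have hθint' : ENNReal.ofReal (theta0 x₀ act c π lam₀ γ₀ n₀)
      = ∫⁻ g, ENNReal.ofReal (c g * (deltaFun x₀ act c lam₀) g ^ (2 * γ₀)) ∂(piStar π n₀) := by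
    exact ofReal_integral_eq_lintegral_ofReal hθint (Filter.Eventually.of_forall fun g =>
      mul_nonneg (hc0 g) (Real.rpow_nonneg (hd0 g).le _))
  refine ⟨A.toReal * 2 ^ s, ?_⟩
  intro t f hfmem
  obtain ⟨K0, hK0⟩ := hfmem
  have hKnn : (0:ℝ) ≤ max K0 0 := le_max_right _ _
  have hK : ∀ x y : M, ‖f x - f y‖ ≤ max K0 0 * wDelta x₀ lam₀ η x y := by
    intro x y
    exact (hK0 x y).trans (mul_le_mul_of_nonneg_right (le_max_left _ _) (hw0 x y))
  -- the weighted Lipschitz bound with the optimal constant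
  have hbdd : BddAbove {ρ : ℝ | ∃ x y : M, x ≠ y ∧ ρ = ‖f x - f y‖ / wDelta x₀ lam₀ η x y} := by
    refine ⟨max K0 0, ?_⟩
    rintro ρ ⟨x, y, hxy, rfl⟩
    rw [div_le_iff₀ (hwpos x y hxy)]
    exact hK x y
  have hm0 : 0 ≤ mGam x₀ lam₀ η f := by
    apply Real.sSup_nonneg
    rintro ρ ⟨x, y, hxy, rfl⟩
    exact div_nonneg (norm_nonneg _) (hw0 x y)
  have hfb : ∀ x y : M, ‖f x - f y‖ ≤ mGam x₀ lam₀ η f * wDelta x₀ lam₀ η x y := by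
    intro x y
    by_cases hxy : x = y
    · subst hxy
      simp [wDelta]
    · have hmem : ‖f x - f y‖ / wDelta x₀ lam₀ η x y ∈
          {ρ : ℝ | ∃ x y : M, x ≠ y ∧ ρ = ‖f x - f y‖ / wDelta x₀ lam₀ η x y} :=
        ⟨x, y, hxy, rfl⟩
      have hle := le_csSup hbdd hmem
      exact (div_le_iff₀ (hwpos x y hxy)).mp hle
  -- growth bound via nrmGam
  have hNbdd : BddAbove {ρ : ℝ | ∃ x : M, ρ = ‖f x‖ / (pfun x₀ lam₀) x ^ (ηt + 1)} := by
    refine ⟨‖f x₀‖ + max K0 0 / lam₀, ?_⟩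
    rintro ρ ⟨z, rfl⟩
    rw [div_le_iff₀ (Real.rpow_pos_of_pos (hp0 z) _)]
    have hpx0 : (pfun x₀ lam₀) x₀ = 1 := by
      simp [pfun]
    have h2 := hK z x₀
    simp only [wDelta, hpx0, Real.one_rpow, mul_one] at h2
    have h4 : dist z x₀ ≤ (pfun x₀ lam₀) z / lam₀ := by
      rw [le_div_iff₀ hlam₀]
      simp only [pfun]
      nlinarith [dist_nonneg (x := z) (y := x₀)]
    have h5 : (pfun x₀ lam₀) z ^ η * (pfun x₀ lam₀) z ≤ (pfun x₀ lam₀) z ^ (ηt + 1) := by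
      have h51 : (pfun x₀ lam₀) z ^ η * (pfun x₀ lam₀) z = (pfun x₀ lam₀) z ^ (η + 1) := by
        have h52 := Real.rpow_add (hp0 z) η 1
        rw [Real.rpow_one] at h52
        rw [h52]
      rw [h51]
      exact Real.rpow_le_rpow_of_exponent_le (hp1 z) (by linarith)
    have h6 : (1:ℝ) ≤ (pfun x₀ lam₀) z ^ (ηt + 1) := by
      have h61 := Real.rpow_le_rpow (by norm_num : (0:ℝ) ≤ 1) (hp1 z) hηt1
      rwa [Real.one_rpow] at h61
    have h7 : max K0 0 * (dist z x₀ * (pfun x₀ lam₀) z ^ η) ≤ (max K0 0 / lam₀) * (pfun x₀ lam₀) z ^ (ηt + 1) := by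
      calc max K0 0 * (dist z x₀ * (pfun x₀ lam₀) z ^ η)
          ≤ max K0 0 * (((pfun x₀ lam₀) z / lam₀) * (pfun x₀ lam₀) z ^ η) := by
            apply mul_le_mul_of_nonneg_left _ hKnn
            exact mul_le_mul_of_nonneg_right h4 (Real.rpow_nonneg (hp0 z).le _)
        _ = (max K0 0 / lam₀) * ((pfun x₀ lam₀) z ^ η * (pfun x₀ lam₀) z) := by ring
        _ ≤ (max K0 0 / lam₀) * (pfun x₀ lam₀) z ^ (ηt + 1) :=
            mul_le_mul_of_nonneg_left h5 (div_nonneg hKnn hlam₀.le)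
    have h8 : ‖f z‖ ≤ ‖f z - f x₀‖ + ‖f x₀‖ := by
      calc ‖f z‖ = ‖(f z - f x₀) + f x₀‖ := by rw [sub_add_cancel]
        _ ≤ ‖f z - f x₀‖ + ‖f x₀‖ := norm_add_le _ _
    have h9 : ‖f x₀‖ ≤ ‖f x₀‖ * (pfun x₀ lam₀) z ^ (ηt + 1) := by
      nlinarith [norm_nonneg (f x₀)]
    calc ‖f z‖ ≤ ‖f z - f x₀‖ + ‖f x₀‖ := h8
      _ ≤ (max K0 0 / lam₀) * (pfun x₀ lam₀) z ^ (ηt + 1) + ‖f x₀‖ * (pfun x₀ lam₀) z ^ (ηt + 1) := by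
          have h10 : ‖f z - f x₀‖ ≤ (max K0 0 / lam₀) * (pfun x₀ lam₀) z ^ (ηt + 1) := by
            refine le_trans ?_ h7
            calc ‖f z - f x₀‖ ≤ max K0 0 * (dist z x₀ * (pfun x₀ lam₀) z ^ η) := h2
              _ = max K0 0 * (dist z x₀ * (pfun x₀ lam₀) z ^ η) := rfl
          linarith
      _ = (‖f x₀‖ + max K0 0 / lam₀) * (pfun x₀ lam₀) z ^ (ηt + 1) := by ring
  have hN0 : 0 ≤ nrmGam x₀ lam₀ ηt f := by
    apply Real.sSup_nonneg
    rintro ρ ⟨z, rfl⟩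
    exact div_nonneg (norm_nonneg _) (Real.rpow_nonneg (hp0 z).le _)
  have hgrowN : ∀ z : M, ‖f z‖ ≤ nrmGam x₀ lam₀ ηt f * (pfun x₀ lam₀) z ^ (ηt + 1) := by
    intro z
    have hmem : ‖f z‖ / (pfun x₀ lam₀) z ^ (ηt + 1) ∈
        {ρ : ℝ | ∃ x : M, ρ = ‖f x‖ / (pfun x₀ lam₀) x ^ (ηt + 1)} := ⟨z, rfl⟩
    have hle := le_csSup hNbdd hmem
    exact (div_le_iff₀ (Real.rpow_pos_of_pos (hp0 z) _)).mp hle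
  -- continuity of f
  have hfc : Continuous f := by
    rw [Metric.continuous_iff]
    intro a ε hε
    have hCf0 : (0:ℝ) < max K0 0 * ((pfun x₀ lam₀) a + 1) ^ η * (pfun x₀ lam₀) a ^ η + 1 := by
      have : (0:ℝ) ≤ max K0 0 * ((pfun x₀ lam₀) a + 1) ^ η * (pfun x₀ lam₀) a ^ η := by
        apply mul_nonneg (mul_nonneg hKnn (Real.rpow_nonneg (by linarith [hp0 a]) _))
          (Real.rpow_nonneg (hp0 a).le _)
      linarith
    refine ⟨min 1 (ε / (max K0 0 * ((pfun x₀ lam₀) a + 1) ^ η * (pfun x₀ lam₀) a ^ η + 1)),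
      lt_min one_pos (div_pos hε hCf0), ?_⟩
    intro b hb
    have hb1 : dist b a < 1 := lt_of_lt_of_le hb (min_le_left _ _)
    have hb2 : dist b a < ε / (max K0 0 * ((pfun x₀ lam₀) a + 1) ^ η * (pfun x₀ lam₀) a ^ η + 1) :=
      lt_of_lt_of_le hb (min_le_right _ _)
    have hpb : (pfun x₀ lam₀) b ≤ (pfun x₀ lam₀) a + 1 := by
      simp only [pfun]
      have htri : dist b x₀ ≤ dist b a + dist a x₀ := dist_triangle _ _ _
      nlinarith [dist_nonneg (x := b) (y := a), dist_nonneg (x := a) (y := x₀)]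
    rw [dist_eq_norm]
    have hcalc : ‖f b - f a‖ ≤ (max K0 0 * ((pfun x₀ lam₀) a + 1) ^ η * (pfun x₀ lam₀) a ^ η + 1) * dist b a := by
      have hKb := hK b a
      simp only [wDelta] at hKb
      have hmono : dist b a * (pfun x₀ lam₀) b ^ η * (pfun x₀ lam₀) a ^ η ≤ dist b a * ((pfun x₀ lam₀) a + 1) ^ η * (pfun x₀ lam₀) a ^ η := by
        apply mul_le_mul_of_nonneg_right _ (Real.rpow_nonneg (hp0 a).le _)
        exact mul_le_mul_of_nonneg_left (Real.rpow_le_rpow (hp0 b).le hpb hη0.le) dist_nonneg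
      calc ‖f b - f a‖ ≤ max K0 0 * (dist b a * (pfun x₀ lam₀) b ^ η * (pfun x₀ lam₀) a ^ η) := hKb
        _ ≤ max K0 0 * (dist b a * ((pfun x₀ lam₀) a + 1) ^ η * (pfun x₀ lam₀) a ^ η) :=
            mul_le_mul_of_nonneg_left hmono hKnn
        _ = (max K0 0 * ((pfun x₀ lam₀) a + 1) ^ η * (pfun x₀ lam₀) a ^ η) * dist b a := by ring
        _ ≤ (max K0 0 * ((pfun x₀ lam₀) a + 1) ^ η * (pfun x₀ lam₀) a ^ η + 1) * dist b a := by
            nlinarith [dist_nonneg (x := b) (y := a)]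
    calc ‖f b - f a‖ ≤ (max K0 0 * ((pfun x₀ lam₀) a + 1) ^ η * (pfun x₀ lam₀) a ^ η + 1) * dist b a := hcalc
      _ < (max K0 0 * ((pfun x₀ lam₀) a + 1) ^ η * (pfun x₀ lam₀) a ^ η + 1) *
            (ε / (max K0 0 * ((pfun x₀ lam₀) a + 1) ^ η * (pfun x₀ lam₀) a ^ η + 1)) :=
          mul_lt_mul_of_pos_left hb2 hCf0
      _ = ε := by field_simp
  have hsm := hfc.stronglyMeasurable
    -- the per-pair estimate, assuming (pfun x₀ lam₀) y ≤ (pfun x₀ lam₀) x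
  have hpair : ∀ x y : M, (pfun x₀ lam₀) y ≤ (pfun x₀ lam₀) x →
      ‖(Pt π act ξ t)^[n₀ + 1] f x - (Pt π act ξ t)^[n₀ + 1] f y‖ ≤
        theta0 x₀ act c π lam₀ γ₀ n₀ * mGam x₀ lam₀ η f * wDelta x₀ lam₀ η x y
          + (A.toReal * 2 ^ s) * |t| * nrmGam x₀ lam₀ ηt f * wDelta x₀ lam₀ η x y := by
    intro x y hyx
    have hk := hkey t f (nrmGam x₀ lam₀ ηt f) hN0 hsm hgrowN x y
    -- first term
    have hI1 : (∫⁻ g, (‖f (act g x) - f (act g y)‖₊ : ℝ≥0∞) ∂(piStar π n₀))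
        ≤ ENNReal.ofReal (mGam x₀ lam₀ η f * wDelta x₀ lam₀ η x y *
            theta0 x₀ act c π lam₀ γ₀ n₀) := by
      have hpt1 : ∀ g : G, (‖f (act g x) - f (act g y)‖₊ : ℝ≥0∞) ≤
          ENNReal.ofReal (c g * (deltaFun x₀ act c lam₀) g ^ (2 * γ₀)) *
            ENNReal.ofReal (mGam x₀ lam₀ η f * wDelta x₀ lam₀ η x y) := by
        intro g
        rw [← ofReal_norm_eq_coe_nnnorm, ← ENNReal.ofReal_mul
          (mul_nonneg (hc0 g) (Real.rpow_nonneg (hd0 g).le _))]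
        apply ENNReal.ofReal_le_ofReal
        calc ‖f (act g x) - f (act g y)‖
            ≤ mGam x₀ lam₀ η f * wDelta x₀ lam₀ η (act g x) (act g y) := hfb _ _
          _ ≤ mGam x₀ lam₀ η f * ((c g * (deltaFun x₀ act c lam₀) g ^ (2 * γ₀)) * wDelta x₀ lam₀ η x y) :=
              mul_le_mul_of_nonneg_left (hWrec g x y) hm0
          _ = (c g * (deltaFun x₀ act c lam₀) g ^ (2 * γ₀)) * (mGam x₀ lam₀ η f * wDelta x₀ lam₀ η x y) := by
              ring
      calc (∫⁻ g, (‖f (act g x) - f (act g y)‖₊ : ℝ≥0∞) ∂(piStar π n₀))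
          ≤ ∫⁻ g, ENNReal.ofReal (c g * (deltaFun x₀ act c lam₀) g ^ (2 * γ₀)) *
              ENNReal.ofReal (mGam x₀ lam₀ η f * wDelta x₀ lam₀ η x y) ∂(piStar π n₀) :=
            lintegral_mono hpt1
        _ = (∫⁻ g, ENNReal.ofReal (c g * (deltaFun x₀ act c lam₀) g ^ (2 * γ₀)) ∂(piStar π n₀)) *
              ENNReal.ofReal (mGam x₀ lam₀ η f * wDelta x₀ lam₀ η x y) :=
            lintegral_mul_const' _ _ ENNReal.ofReal_ne_top
        _ = ENNReal.ofReal (theta0 x₀ act c π lam₀ γ₀ n₀) *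
              ENNReal.ofReal (mGam x₀ lam₀ η f * wDelta x₀ lam₀ η x y) := by
            rw [← hθint']
        _ = ENNReal.ofReal (mGam x₀ lam₀ η f * wDelta x₀ lam₀ η x y *
              theta0 x₀ act c π lam₀ γ₀ n₀) := by
            rw [← ENNReal.ofReal_mul hθ0]
            congr 1
            ring
    -- comparison of Q with wDelta
    have hQw : dist x y * ((pfun x₀ lam₀) x + (pfun x₀ lam₀) y) ^ s * (pfun x₀ lam₀) y ^ (ηt + 1)
        ≤ 2 ^ s * wDelta x₀ lam₀ η x y := by
      have hq1 : ((pfun x₀ lam₀) x + (pfun x₀ lam₀) y) ^ s ≤ 2 ^ s * (pfun x₀ lam₀) x ^ s := by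
        calc ((pfun x₀ lam₀) x + (pfun x₀ lam₀) y) ^ s ≤ (2 * (pfun x₀ lam₀) x) ^ s :=
              Real.rpow_le_rpow (add_nonneg (hp0 x).le (hp0 y).le) (by linarith) hs
          _ = 2 ^ s * (pfun x₀ lam₀) x ^ s := Real.mul_rpow (by norm_num) (hp0 x).le
      have hq2 : (pfun x₀ lam₀) y ^ (ηt + 1) ≤ (pfun x₀ lam₀) y ^ η * (pfun x₀ lam₀) x ^ (ηt + 1 - η) := by
        have hq21 : (pfun x₀ lam₀) y ^ (ηt + 1) = (pfun x₀ lam₀) y ^ η * (pfun x₀ lam₀) y ^ (ηt + 1 - η) := by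
          rw [← Real.rpow_add (hp0 y)]
          congr 1
          ring
        rw [hq21]
        exact mul_le_mul_of_nonneg_left
          (Real.rpow_le_rpow (hp0 y).le hyx (by linarith)) (Real.rpow_nonneg (hp0 y).le _)
      have hq3 : (pfun x₀ lam₀) x ^ s * (pfun x₀ lam₀) x ^ (ηt + 1 - η) ≤ (pfun x₀ lam₀) x ^ η := by
        rw [← Real.rpow_add (hp0 x)]
        exact Real.rpow_le_rpow_of_exponent_le (hp1 x) (by linarith)
      have hq4 : dist x y * ((pfun x₀ lam₀) x + (pfun x₀ lam₀) y) ^ s ≤ dist x y * (2 ^ s * (pfun x₀ lam₀) x ^ s) :=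
        mul_le_mul_of_nonneg_left hq1 dist_nonneg
      have hq5 : dist x y * ((pfun x₀ lam₀) x + (pfun x₀ lam₀) y) ^ s * (pfun x₀ lam₀) y ^ (ηt + 1)
          ≤ (dist x y * (2 ^ s * (pfun x₀ lam₀) x ^ s)) * ((pfun x₀ lam₀) y ^ η * (pfun x₀ lam₀) x ^ (ηt + 1 - η)) :=
        mul_le_mul hq4 hq2 (Real.rpow_nonneg (hp0 y).le _)
          (mul_nonneg dist_nonneg (mul_nonneg (Real.rpow_nonneg (by norm_num) _)
            (Real.rpow_nonneg (hp0 x).le _)))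
      refine hq5.trans ?_
      have hq6 : (dist x y * (2 ^ s * (pfun x₀ lam₀) x ^ s)) * ((pfun x₀ lam₀) y ^ η * (pfun x₀ lam₀) x ^ (ηt + 1 - η))
          = 2 ^ s * (dist x y * ((pfun x₀ lam₀) x ^ s * (pfun x₀ lam₀) x ^ (ηt + 1 - η)) * (pfun x₀ lam₀) y ^ η) := by
        ring
      rw [hq6]
      simp only [wDelta]
      have hq7 : dist x y * ((pfun x₀ lam₀) x ^ s * (pfun x₀ lam₀) x ^ (ηt + 1 - η)) * (pfun x₀ lam₀) y ^ η
          ≤ dist x y * (pfun x₀ lam₀) x ^ η * (pfun x₀ lam₀) y ^ η := by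
        apply mul_le_mul_of_nonneg_right _ (Real.rpow_nonneg (hp0 y).le _)
        exact mul_le_mul_of_nonneg_left hq3 dist_nonneg
      exact mul_le_mul_of_nonneg_left hq7 (Real.rpow_nonneg (by norm_num) _)
    -- assemble
    have hfin : (‖(Pt π act ξ t)^[n₀ + 1] f x - (Pt π act ξ t)^[n₀ + 1] f y‖₊ : ℝ≥0∞)
        ≤ ENNReal.ofReal (mGam x₀ lam₀ η f * wDelta x₀ lam₀ η x y *
            theta0 x₀ act c π lam₀ γ₀ n₀)
          + A * ENNReal.ofReal (|t| * nrmGam x₀ lam₀ ηt f *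
              (2 ^ s * wDelta x₀ lam₀ η x y)) := by
      refine hk.trans (add_le_add hI1 (mul_le_mul_right (ENNReal.ofReal_le_ofReal ?_) A))
      exact mul_le_mul_of_nonneg_left hQw (mul_nonneg (abs_nonneg t) hN0)
    have hRne : ENNReal.ofReal (mGam x₀ lam₀ η f * wDelta x₀ lam₀ η x y *
          theta0 x₀ act c π lam₀ γ₀ n₀)
        + A * ENNReal.ofReal (|t| * nrmGam x₀ lam₀ ηt f *
            (2 ^ s * wDelta x₀ lam₀ η x y)) ≠ ⊤ :=
      ENNReal.add_ne_top.mpr ⟨ENNReal.ofReal_ne_top,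
        ENNReal.mul_ne_top hA_ne ENNReal.ofReal_ne_top⟩
    have hto := ENNReal.toReal_mono hRne hfin
    rw [ENNReal.toReal_add ENNReal.ofReal_ne_top
        (ENNReal.mul_ne_top hA_ne ENNReal.ofReal_ne_top), ENNReal.toReal_mul,
      ENNReal.toReal_ofReal (mul_nonneg (mul_nonneg hm0 (hw0 x y)) hθ0),
      ENNReal.toReal_ofReal (mul_nonneg (mul_nonneg (abs_nonneg t) hN0)
        (mul_nonneg (Real.rpow_nonneg (by norm_num) _) (hw0 x y))),
      ENNReal.coe_toReal, coe_nnnorm] at hto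
    calc ‖(Pt π act ξ t)^[n₀ + 1] f x - (Pt π act ξ t)^[n₀ + 1] f y‖
        ≤ mGam x₀ lam₀ η f * wDelta x₀ lam₀ η x y * theta0 x₀ act c π lam₀ γ₀ n₀
          + A.toReal * (|t| * nrmGam x₀ lam₀ ηt f * (2 ^ s * wDelta x₀ lam₀ η x y)) := hto
      _ = theta0 x₀ act c π lam₀ γ₀ n₀ * mGam x₀ lam₀ η f * wDelta x₀ lam₀ η x y
          + (A.toReal * 2 ^ s) * |t| * nrmGam x₀ lam₀ ηt f * wDelta x₀ lam₀ η x y := by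
        ring
  -- final bound on the sSup
  have hBnn : 0 ≤ theta0 x₀ act c π lam₀ γ₀ n₀ * mGam x₀ lam₀ η f
      + A.toReal * 2 ^ s * |t| * nrmGam x₀ lam₀ ηt f := by
    have hb1 : 0 ≤ theta0 x₀ act c π lam₀ γ₀ n₀ * mGam x₀ lam₀ η f := mul_nonneg hθ0 hm0
    have hb2 : 0 ≤ A.toReal * 2 ^ s * |t| * nrmGam x₀ lam₀ ηt f :=
      mul_nonneg (mul_nonneg (mul_nonneg ENNReal.toReal_nonneg
        (Real.rpow_nonneg (by norm_num) _)) (abs_nonneg t)) hN0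
    linarith
  apply Real.sSup_le _ hBnn
  rintro ρ ⟨x, y, hxy, rfl⟩
  rw [div_le_iff₀ (hwpos x y hxy)]
  rcases le_total ((pfun x₀ lam₀) y) ((pfun x₀ lam₀) x) with hyx | hxy2
  · calc ‖(Pt π act ξ t)^[n₀ + 1] f x - (Pt π act ξ t)^[n₀ + 1] f y‖
        ≤ theta0 x₀ act c π lam₀ γ₀ n₀ * mGam x₀ lam₀ η f * wDelta x₀ lam₀ η x y
          + (A.toReal * 2 ^ s) * |t| * nrmGam x₀ lam₀ ηt f * wDelta x₀ lam₀ η x y :=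
          hpair x y hyx
      _ = (theta0 x₀ act c π lam₀ γ₀ n₀ * mGam x₀ lam₀ η f
          + A.toReal * 2 ^ s * |t| * nrmGam x₀ lam₀ ηt f) * wDelta x₀ lam₀ η x y := by
        ring
  · have hsymm : wDelta x₀ lam₀ η x y = wDelta x₀ lam₀ η y x := by
      simp only [wDelta]
      rw [dist_comm]
      ring
    rw [norm_sub_rev, hsymm]
    calc ‖(Pt π act ξ t)^[n₀ + 1] f y - (Pt π act ξ t)^[n₀ + 1] f x‖
        ≤ theta0 x₀ act c π lam₀ γ₀ n₀ * mGam x₀ lam₀ η f * wDelta x₀ lam₀ η y x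
          + (A.toReal * 2 ^ s) * |t| * nrmGam x₀ lam₀ ηt f * wDelta x₀ lam₀ η y x :=
          hpair y x hxy2
      _ = (theta0 x₀ act c π lam₀ γ₀ n₀ * mGam x₀ lam₀ η f
          + A.toReal * 2 ^ s * |t| * nrmGam x₀ lam₀ ηt f) * wDelta x₀ lam₀ η y x := by
        ring


end
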